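/- Let S be an extendable Stallings section for an m-epi π : Ã* → G and let H be a finitely generated subgroup of G. Then H has finite index in G if and only if S ⊆ Pref(S_H). -/

import Mathlib

/-!  Common framework: words over an involutive alphabet Ã = A ∪ A⁻¹ (modelled as
`α × Bool`), free reduction, matched epimorphisms, Stallings sections and
Ã-automata, following Silva–Soler-Escrivà–Ventura. -/

/-- A word over the involutive alphabet Ã = A ∪ A⁻¹: the letter `(a, tt)` denotes
`a` and `(a, ff)` denotes `a⁻¹` (the `FreeGroup` convention). -/
abbrev Word (α : Type) : Type := List (α × Bool)

namespace Stallings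

instance {β : Type} : HasSubset (Language β) := ⟨fun L M => ∀ w ∈ L, w ∈ M⟩
instance {β : Type} : Union (Language β) := ⟨fun L M => {w | w ∈ L ∨ w ∈ M}⟩
instance {β : Type} : Inter (Language β) := ⟨fun L M => {w | w ∈ L ∧ w ∈ M}⟩
instance {β : Type} : EmptyCollection (Language β) := ⟨(∅ : Set (List β))⟩

variable {α : Type} {G : Type} [Group G]

/-- The formal inverse of a letter of Ã. -/
def letterInv (x : α × Bool) : α × Bool := (x.1, !x.2)

/-- The formal inverse `w⁻¹` of a word over Ã. -/
def wordInv (w : Word α) : Word α := (w.map letterInv).reverse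

/-- The free reduction `w̄` of a word over Ã (iterated deletion of factors `a a⁻¹`). -/
noncomputable def redW (w : Word α) : Word α :=
  letI := Classical.decEq α
  FreeGroup.reduce w

/-- The reduction `L̄` of a language over Ã. -/
noncomputable def red (L : Language (α × Bool)) : Language (α × Bool) :=
  redW '' L

/-- The set `R_A` of reduced words over Ã. -/
noncomputable def Reduced : Language (α × Bool) := {w | redW w = w}

/-- Evaluation of a monoid homomorphism `π : Ã* → G` at a word. -/
def ev (π : FreeMonoid (α × Bool) →* G) (w : Word α) : G :=
  π (FreeMonoid.ofList w)

/-- The image of a language under (evaluation of) `π`. -/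
def evImg (π : FreeMonoid (α × Bool) →* G) (L : Language (α × Bool)) : Set G :=
  {g | ∃ w ∈ L, ev π w = g}

/-- A matched epimorphism (m-epi) `π : Ã* → G`: a surjective monoid homomorphism
sending formal inverses to inverses. -/
structure IsMEpi (π : FreeMonoid (α × Bool) →* G) : Prop where
  surjective : Function.Surjective π
  matched : ∀ (a : α) (b : Bool),
    π (FreeMonoid.of (a, !b)) = (π (FreeMonoid.of (a, b)))⁻¹

/-- `S_X = Xπ⁻¹ ∩ S`, for `X ⊆ G`. -/
def sub (S : Language (α × Bool)) (π : FreeMonoid (α × Bool) →* G) (X : Set G) :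
    Language (α × Bool) :=
  {w ∈ S | ev π w ∈ X}

/-- A Stallings section for an m-epi `π : Ã* → G`: a regular section `S ⊆ R_A`
such that each `S_g` is regular (S1), and `S_{gh} ⊆ (S_g S_h)‾` (S2). -/
structure IsStallingsSection (π : FreeMonoid (α × Bool) →* G)
    (S : Language (α × Bool)) : Prop where
  regular : S.IsRegular
  reduced : S ⊆ Reduced
  inv_mem : ∀ w ∈ S, wordInv w ∈ S
  exists_rep : ∀ g : G, ∃ w ∈ S, ev π w = g
  s1 : ∀ g : G, (sub S π {g}).IsRegular
  s2 : ∀ g h : G, sub S π {g * h} ⊆ red (sub S π {g} * sub S π {h})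

/-- A group has a Stallings section if some m-epi onto it (from the free monoid on
an involutive finite alphabet) admits a Stallings section. -/
def HasStallingsSection (G : Type) [Group G] : Prop :=
  ∃ (α : Type) (π : FreeMonoid (α × Bool) →* G) (S : Language (α × Bool)),
    Finite α ∧ IsMEpi π ∧ IsStallingsSection π S

/-- `Pref L`: the set of prefixes of words of `L`. -/
def Pref (L : Language (α × Bool)) : Language (α × Bool) :=
  {u | ∃ v, u ++ v ∈ L}

/-- An extendable Stallings section: every `u ∈ S` admits a reduced word `v` with
`u vⁿ ∈ S` for all `n` and `u ∈ Pref (S_{(u vⁿ u⁻¹)π})` for almost all `n`. -/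
def Extendable (π : FreeMonoid (α × Bool) →* G) (S : Language (α × Bool)) : Prop :=
  ∀ u ∈ S, ∃ v : Word α, v ∈ Reduced ∧
    (∀ n : ℕ, u ++ (List.replicate n v).flatten ∈ S) ∧
    ∃ N : ℕ, ∀ n ≥ N, u ∈ Pref (sub S π {ev π u * (ev π v) ^ n * (ev π u)⁻¹})

/-- An Ã-automaton with state type `Q`, initial state `start`, terminal states
`accept` and edge set `edges`. -/
structure Automaton (β : Type) (Q : Type) where
  start : Q
  accept : Set Q
  edges : Set (Q × β × Q)

namespace Automaton

variable {β Q : Type}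

/-- `M.Path p w q`: there is a path from `p` to `q` labelled `w`. -/
inductive Path (M : Automaton β Q) : Q → List β → Q → Prop
  | nil (q : Q) : Path M q [] q
  | cons {p q r : Q} {a : β} {w : List β} :
      (p, a, q) ∈ M.edges → Path M q w r → Path M p (a :: w) r

/-- The language recognized by an automaton. -/
def lang (M : Automaton β Q) : Language β :=
  {w | ∃ t ∈ M.accept, M.Path M.start w t}

/-- A trim automaton: every state lies on some successful path. -/
def Trim (M : Automaton β Q) : Prop :=
  ∀ q : Q, ∃ (u v : List β) (t : Q), t ∈ M.accept ∧ M.Path M.start u q ∧ M.Path q v t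

/-- An involutive Ã-automaton. -/
def Involutive {α : Type} (M : Automaton (α × Bool) Q) : Prop :=
  ∀ p a q, (p, a, q) ∈ M.edges → (q, letterInv a, p) ∈ M.edges

/-- A deterministic automaton. -/
def Deterministic (M : Automaton β Q) : Prop :=
  ∀ p a q q', (p, a, q) ∈ M.edges → (p, a, q') ∈ M.edges → q = q'

/-- An inverse automaton: involutive, deterministic, trim, with a single
terminal state. -/
def IsInverse {α : Type} (M : Automaton (α × Bool) Q) : Prop :=
  M.Involutive ∧ M.Deterministic ∧ M.Trim ∧ ∃ t : Q, M.accept = {t}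

/-- The automaton obtained by identifying the states `p` and `q` (the quotient is
realized on the same state type, redirecting `q` to `p`). -/
def merge [DecidableEq Q] (M : Automaton β Q) (p q : Q) : Automaton β Q :=
  let f : Q → Q := fun x => if x = q then p else x
  { start := f M.start
    accept := f '' M.accept
    edges := {e | ∃ e' ∈ M.edges, e = (f e'.1, e'.2.1, f e'.2.2)} }

end Automaton

end Stallings

/-! Write `H = ⟨T⟩` and `K = S_X` for the finite set `X = {1} ∪ T ∪ T⁻¹`: a regular language
with `Kπ ⊆ H`, and (S2), applied along products of elements of `X`, gives `S_H ⊆ (K*)‾`.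
If `u ∈ S` is a prefix of a word of `S_H`, the reduction can be undone along a prefix: `u = ȳ`
with `y` a prefix of a word of `K*`, so `y = x q` with `x ∈ K*` and `q ∈ Pref K`, and then
`(uπ)⁻¹H = (qπ)⁻¹H`. That coset is `sH` for any `s` with `q s ∈ K`, so it depends only on the
left quotient `q⁻¹K`, of which there are finitely many (Myhill–Nerode). As `u` ranges over `S`,
`(uπ)⁻¹` ranges over `G`, so `H` has finitely many cosets.
Conversely, if `H` has finite index, some power `cᵏ` (`k > 0`) of `c = uπ vπ (uπ)⁻¹` lies in `H`,
and extendability makes `u` a prefix of a word of `S_{cᵏᴺ} ⊆ S_H`. -/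

namespace FreeGroup

variable {α : Type*} [DecidableEq α]

theorem exists_append_of_reduce_eq_append {w z₁ z₂ : List (α × Bool)}
    (h : reduce w = z₁ ++ z₂) : ∃ w₁ w₂, w = w₁ ++ w₂ ∧ reduce w₁ = z₁ ∧ reduce w₂ = z₂ := by
  induction w generalizing z₁ with
  | nil =>
    obtain ⟨rfl, rfl⟩ := List.append_eq_nil_iff.1 h.symm
    exact ⟨[], [], rfl, rfl, rfl⟩
  | cons x w ih =>
    rcases z₁ with _ | ⟨y₁, z₁⟩
    · exact ⟨[], x :: w, rfl, rfl, h⟩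
    rw [reduce.cons] at h
    rcases hw : reduce w with _ | ⟨y, t⟩
    · rw [hw] at h
      simp only [List.cons_append, List.cons.injEq, List.nil_eq, List.append_eq_nil_iff] at h
      obtain ⟨rfl, rfl, rfl⟩ := h
      exact ⟨[x], w, rfl, rfl, hw⟩
    rw [hw] at h
    dsimp only at h
    split_ifs at h with hc
    · obtain ⟨w₁, w₂, rfl, h₁, h₂⟩ := ih (z₁ := y :: y₁ :: z₁) (by rw [hw, h]; rfl)
      exact ⟨x :: w₁, w₂, rfl, by rw [reduce.cons, h₁]; exact if_pos hc, h₂⟩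
    · simp only [List.cons_append, List.cons.injEq] at h
      obtain ⟨rfl, h⟩ := h
      obtain ⟨w₁, w₂, rfl, h₁, h₂⟩ := ih (z₁ := z₁) (by rw [hw, h])
      refine ⟨x :: w₁, w₂, rfl, ?_, h₂⟩
      rw [reduce.cons, h₁]
      rcases z₁ with _ | ⟨y', t'⟩
      · rfl
      · simp only [List.cons_append, List.cons.injEq] at h
        obtain ⟨rfl, -⟩ := h
        exact if_neg hc

end FreeGroup

namespace Stallings

open Computability

variable {α G : Type} [Group G] {π : FreeMonoid (α × Bool) →* G}

theorem redW_append_redW_redW (x y : Word α) : redW (redW x ++ redW y) = redW (x ++ y) := by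
  let := Classical.decEq α
  exact FreeGroup.reduce_append_reduce_reduce

theorem exists_append_of_redW_eq_append {w z₁ z₂ : Word α} (h : redW w = z₁ ++ z₂) :
    ∃ w₁ w₂, w = w₁ ++ w₂ ∧ redW w₁ = z₁ ∧ redW w₂ = z₂ := by
  let := Classical.decEq α
  exact FreeGroup.exists_append_of_reduce_eq_append h

theorem ev_append (π : FreeMonoid (α × Bool) →* G) (u v : Word α) :
    ev π (u ++ v) = ev π u * ev π v := by
  simp [ev]

theorem IsMEpi.ev_eq_lift_mk (hπ : IsMEpi π) (w : Word α) :
    ev π w = FreeGroup.lift (fun a => π (FreeMonoid.of (a, true))) (FreeGroup.mk w) := by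
  induction w with
  | nil => simp [ev]
  | cons x w ih =>
    obtain ⟨a, b⟩ := x
    rw [← List.singleton_append, ev_append, ih, ← FreeGroup.mul_mk, map_mul]
    cases b
    · simpa [ev] using hπ.matched a true
    · simp [ev]

theorem IsMEpi.ev_redW (hπ : IsMEpi π) (w : Word α) : ev π (redW w) = ev π w := by
  let := Classical.decEq α
  rw [hπ.ev_eq_lift_mk, hπ.ev_eq_lift_mk]
  exact congrArg _ FreeGroup.reduce.self

theorem append_mem_kstar {β : Type*} {K : Language β} {x y : List β} (hx : x ∈ K∗)
    (hy : y ∈ K∗) : x ++ y ∈ K∗ := by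
  rw [← kstar_mul_kstar K]
  exact Language.mem_mul.2 ⟨x, hx, y, hy, rfl⟩

theorem mem_kstar_or_exists_of_mem_pref_kstar {K : Language (α × Bool)} {p : Word α}
    (hp : p ∈ Pref (K∗)) : p ∈ K∗ ∨ ∃ x ∈ K∗, ∃ q ∈ Pref K, p = x ++ q := by
  obtain ⟨s, hs⟩ := hp
  obtain ⟨L, hL, hLK⟩ := Language.mem_kstar.1 hs
  clear hs
  induction L generalizing p with
  | nil =>
    obtain ⟨rfl, -⟩ := List.append_eq_nil_iff.1 hL
    exact .inl (Language.nil_mem_kstar K)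
  | cons y L ih =>
    have hyK : y ∈ K := hLK y (.head L)
    rw [List.flatten_cons] at hL
    rcases List.append_eq_append_iff.1 hL with ⟨s', rfl, -⟩ | ⟨p', rfl, hp'⟩
    · exact .inr ⟨[], Language.nil_mem_kstar K, p, ⟨s', hyK⟩, rfl⟩
    have hy : y ∈ K∗ := Language.mem_kstar.2 ⟨[y], by simp, by simpa using hyK⟩
    rcases ih hp'.symm (fun z hz => hLK z (.tail y hz)) with hp' | ⟨x, hx, q, hq, rfl⟩
    · exact .inl (append_mem_kstar hy hp')
    · exact .inr ⟨y ++ x, append_mem_kstar hy hx, q, hq, by simp⟩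

theorem ev_mem_of_mem_kstar {H : Subgroup G} {K : Language (α × Bool)}
    (hKH : ∀ w ∈ K, ev π w ∈ H) {w : Word α} (hw : w ∈ K∗) : ev π w ∈ H := by
  obtain ⟨L, rfl, hLK⟩ := Language.mem_kstar.1 hw
  clear hw
  induction L with
  | nil => simp [ev]
  | cons y L ih =>
    rw [List.flatten_cons, ev_append]
    exact H.mul_mem (hKH y (hLK y (.head L))) (ih fun z hz => hLK z (.tail y hz))

section invCoset

variable (π) (H : Subgroup G)

def invCoset (u : Word α) : G ⧸ H := ((ev π u)⁻¹ : G)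

variable {π H}

theorem invCoset_append_of_mem {x : Word α} (hx : ev π x ∈ H) (q : Word α) :
    invCoset π H (x ++ q) = invCoset π H q := by
  refine QuotientGroup.eq.2 ?_
  simpa [ev_append] using hx

theorem invCoset_eq_of_append_mem {u s : Word α} (h : ev π (u ++ s) ∈ H) :
    invCoset π H u = QuotientGroup.mk (ev π s) := by
  refine QuotientGroup.eq.2 ?_
  simpa [ev_append] using h

theorem IsMEpi.invCoset_redW (hπ : IsMEpi π) (w : Word α) :
    invCoset π H (redW w) = invCoset π H w := by
  simp only [invCoset, hπ.ev_redW]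

theorem finite_invCoset_image_pref {K : Language (α × Bool)} (hK : K.IsRegular)
    (hKH : ∀ w ∈ K, ev π w ∈ H) : (invCoset π H '' Pref K).Finite := by
  classical
  let cosetOfQuotient (L : Language (α × Bool)) : G ⧸ H :=
    if h : ∃ s, s ∈ L then QuotientGroup.mk (ev π h.choose) else QuotientGroup.mk 1
  refine (hK.finite_range_leftQuotient.image cosetOfQuotient).subset ?_
  rintro _ ⟨u, ⟨s, hs⟩, rfl⟩
  have hne : ∃ s, s ∈ K.leftQuotient u := ⟨s, hs⟩
  refine ⟨K.leftQuotient u, ⟨u, rfl⟩, ?_⟩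
  rw [invCoset_eq_of_append_mem (hKH _ hne.choose_spec)]
  exact dif_pos hne

theorem invCoset_mem_of_mem_pref_kstar {K : Language (α × Bool)} (hKH : ∀ w ∈ K, ev π w ∈ H)
    {p : Word α} (hp : p ∈ Pref (K∗)) :
    invCoset π H p ∈ insert (invCoset π H []) (invCoset π H '' Pref K) := by
  rcases mem_kstar_or_exists_of_mem_pref_kstar hp with hp | ⟨x, hx, q, hq, rfl⟩
  · rw [← p.append_nil, invCoset_append_of_mem (ev_mem_of_mem_kstar hKH hp)]
    exact .inl rfl
  · rw [invCoset_append_of_mem (ev_mem_of_mem_kstar hKH hx)]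
    exact .inr ⟨q, hq, rfl⟩

theorem IsMEpi.finite_invCoset_image_pref_red_kstar (hπ : IsMEpi π) {K : Language (α × Bool)}
    (hK : K.IsRegular) (hKH : ∀ w ∈ K, ev π w ∈ H) :
    (invCoset π H '' Pref (red (K∗))).Finite := by
  refine ((finite_invCoset_image_pref hK hKH).insert (invCoset π H [])).subset ?_
  rintro _ ⟨u, ⟨v, y, hy, hyuv⟩, rfl⟩
  obtain ⟨y₁, y₂, rfl, rfl, -⟩ := exists_append_of_redW_eq_append hyuv
  rw [hπ.invCoset_redW]
  exact invCoset_mem_of_mem_pref_kstar hKH ⟨y₂, hy⟩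

end invCoset

variable {S : Language (α × Bool)}

theorem sub_insert (g : G) (X : Set G) : sub S π (insert g X) = sub S π {g} + sub S π X := by
  ext w
  exact and_or_left

theorem IsStallingsSection.isRegular_sub (hS : IsStallingsSection π S) {X : Set G}
    (hX : X.Finite) : (sub S π X).IsRegular := by
  induction X, hX using Set.Finite.induction_on with
  | empty =>
    refine ⟨Unit, inferInstance, ⟨fun _ _ => (), (), ∅⟩, ?_⟩
    ext w
    exact ⟨fun h => h.elim, fun h => h.2.elim⟩
  | insert _ _ ih => rw [sub_insert]; exact (hS.s1 _).add ih

theorem IsStallingsSection.sub_subset_red_kstar (hS : IsStallingsSection π S) {X : Set G}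
    (h1 : 1 ∈ X) {g : G} (hg : g ∈ Submonoid.closure X) : sub S π {g} ⊆ red ((sub S π X)∗) := by
  have base : ∀ x ∈ X, sub S π {x} ⊆ red ((sub S π X)∗) := by
    intro x hx w hw
    have hwX : w ∈ sub S π X := ⟨hw.1, Set.mem_singleton_iff.1 hw.2 ▸ hx⟩
    exact ⟨w, Language.mem_kstar.2 ⟨[w], by simp, by simpa using hwX⟩, hS.reduced w hw.1⟩
  induction hg using Submonoid.closure_induction with
  | mem x hx => exact base x hx
  | one => exact base 1 h1
  | mul x y _ _ ihx ihy =>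
    intro w hw
    obtain ⟨z, hz, rfl⟩ := hS.s2 x y w hw
    obtain ⟨u₁, hu₁, u₂, hu₂, rfl⟩ := Language.mem_mul.1 hz
    obtain ⟨y₁, hy₁, rfl⟩ := ihx u₁ hu₁
    obtain ⟨y₂, hy₂, rfl⟩ := ihy u₂ hu₂
    exact ⟨y₁ ++ y₂, append_mem_kstar hy₁ hy₂, (redW_append_redW_redW y₁ y₂).symm⟩

theorem IsStallingsSection.finite_quotient_of_subset_pref (hS : IsStallingsSection π S)
    (hπ : IsMEpi π) {H : Subgroup G} (hH : H.FG) (hsub : S ⊆ Pref (sub S π H)) :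
    Finite (G ⧸ H) := by
  obtain ⟨T, rfl⟩ := hH
  let X : Set G := insert 1 (↑T ∪ (↑T)⁻¹)
  have hXH : X ⊆ Subgroup.closure (T : Set G) := by
    rintro x (rfl | hx | hx)
    · exact one_mem _
    · exact Subgroup.subset_closure hx
    · exact (Subgroup.inv_mem_iff _).1 (Subgroup.subset_closure hx)
  have hSH : sub S π (Subgroup.closure (T : Set G)) ⊆ red ((sub S π X)∗) := by
    intro w hw
    refine hS.sub_subset_red_kstar (Set.mem_insert 1 _) ?_ w ⟨hw.1, rfl⟩
    refine Submonoid.closure_mono (Set.subset_insert _ _) ?_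
    rw [← Subgroup.closure_toSubmonoid]
    exact hw.2
  have hfin := hπ.finite_invCoset_image_pref_red_kstar
    (hS.isRegular_sub ((T.finite_toSet.union T.finite_toSet.inv).insert 1))
    (H := Subgroup.closure (T : Set G)) fun w hw => hXH hw.2
  refine Set.finite_univ_iff.1 (hfin.subset ?_)
  refine fun q _ => QuotientGroup.induction_on q fun g => ?_
  obtain ⟨u, hu, hug⟩ := hS.exists_rep g⁻¹
  obtain ⟨v, hv⟩ := hsub u hu
  exact ⟨u, ⟨v, hSH _ hv⟩, by simp [invCoset, hug]⟩

theorem Extendable.subset_pref_of_finiteIndex (hE : Extendable π S) (H : Subgroup G)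
    [H.FiniteIndex] : S ⊆ Pref (sub S π H) := by
  intro u hu
  obtain ⟨v, -, -, N, hN⟩ := hE u hu
  obtain ⟨k, hk, -, hkH⟩ := Subgroup.exists_pow_mem_of_index_ne_zero
    (Subgroup.FiniteIndex.index_ne_zero (H := H)) (ev π u * ev π v * (ev π u)⁻¹)
  obtain ⟨s, hs, hsev⟩ := hN (k * N) (Nat.le_mul_of_pos_left N hk)
  refine ⟨s, hs, ?_⟩
  rw [Set.mem_singleton_iff.1 hsev, ← conj_pow, pow_mul]
  exact pow_mem hkH N

end Stallings

open Stallings in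
theorem finiteIndex_iff_subset_pref_general {α G : Type} [Group G]
    (π : FreeMonoid (α × Bool) →* G) (hπ : IsMEpi π)
    (S : Language (α × Bool)) (hS : IsStallingsSection π S) (hE : Extendable π S)
    (H : Subgroup G) (hH : H.FG) :
    H.FiniteIndex ↔ S ⊆ Pref (sub S π ↑H) := by
  refine ⟨fun _ => hE.subset_pref_of_finiteIndex H, fun hsub => ?_⟩
  have := hS.finite_quotient_of_subset_pref hπ hH hsub
  exact Subgroup.finiteIndex_of_finite_quotient

open Stallings in
/-- Let `S` be an extendable Stallings section for the m-epi `π`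
and let `H` be a f.g. subgroup of `G`. Then `H` has finite index in `G` if and
only if `S ⊆ Pref (S_H)`. -/
theorem finiteIndex_iff_subset_pref {α G : Type} [Finite α] [Group G]
    (π : FreeMonoid (α × Bool) →* G) (hπ : IsMEpi π)
    (S : Language (α × Bool)) (hS : IsStallingsSection π S) (hE : Extendable π S)
    (H : Subgroup G) (hH : H.FG) :
    H.FiniteIndex ↔ S ⊆ Pref (sub S π ↑H) :=
  finiteIndex_iff_subset_pref_general π hπ S hS hE H hH
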